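/- Let Z be a RF on a complete non-atomic probability space satisfying (★). Then for every Z̃ ∈ C[Z] one has P(S(Z̃) > 0) = 1, i.e., almost surely ∫_T ‖Z̃(t)‖^α λ(dt) > 0. -/

import Mathlib

open MeasureTheory ProbabilityTheory Filter
open scoped ENNReal Topology

noncomputable section

abbrev Tsp (l : ℕ) : Type := EuclideanSpace ℝ (Fin l)
abbrev Vsp (d : ℕ) : Type := EuclideanSpace ℝ (Fin d)
abbrev RPath (l d : ℕ) : Type := Tsp l → Vsp d

/-- The shift `B^h f = f(· − h)`. -/
def shift {l d : ℕ} (h : Tsp l) (f : RPath l d) : RPath l d := fun t => f (t - h)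

/-- Joint measurability of a random field. -/
def JointlyMeasurable {Ω : Type*} [MeasurableSpace Ω] {l d : ℕ} (Z : Ω → RPath l d) : Prop :=
  Measurable fun p : Ω × Tsp l => Z p.1 p.2

/-- `F ∈ H_β`: product-measurable and `β`-homogeneous maps on path space. -/
def Hom (l d : ℕ) (β : ℝ) (F : RPath l d → ℝ≥0∞) : Prop :=
  Measurable F ∧
  ∀ c : ℝ, 0 < c → ∀ f : RPath l d,
    F (fun t => c • f t) = ENNReal.ofReal (c ^ β) * F f

/-- Condition (★). -/
def StarC {Ω : Type*} [MeasurableSpace Ω] (P : Measure Ω) {l d : ℕ} (α : ℝ)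
    (Z : Ω → RPath l d) : Prop :=
  JointlyMeasurable Z ∧
  (∫⁻ ω, ENNReal.ofReal (‖Z ω 0‖ ^ α) ∂P) = 1 ∧
  ∃ T₀ : Set (Tsp l), T₀.Countable ∧ P {ω | ∃ t ∈ T₀, 0 < ‖Z ω t‖} = 1

/-- `Z̃ ∈ C[Z]`. -/
def MemC {Ω Ω' : Type*} [MeasurableSpace Ω] [MeasurableSpace Ω']
    (P : Measure Ω) (P' : Measure Ω') {l d : ℕ} (α : ℝ)
    (Z : Ω → RPath l d) (ZT : Ω' → RPath l d) : Prop :=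
  StarC P' α ZT ∧
  ∀ F : RPath l d → ℝ≥0∞, Hom l d α F → ∀ h : Tsp l,
    (∫⁻ ω, F (Z ω) ∂P) = ∫⁻ ω', F (shift h (ZT ω')) ∂P'

/-- `S_γ(f) = ∫ ‖f(t)‖^α γ(t) dt`. -/
def Sgam {l d : ℕ} (α : ℝ) (γ : Tsp l → ℝ) (f : RPath l d) : ℝ≥0∞ :=
  ∫⁻ t, ENNReal.ofReal (‖f t‖ ^ α * γ t)

/-- `S(f) = ∫ ‖f(t)‖^α dt`. -/
def Sfun {l d : ℕ} (α : ℝ) (f : RPath l d) : ℝ≥0∞ :=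
  ∫⁻ t, ENNReal.ofReal (‖f t‖ ^ α)

/-- The local random field `Z̃/‖Z̃(0)‖` (set to `0` where `‖Z̃(0)‖ = 0`). -/
def localRF {Ω : Type*} {l d : ℕ} (ZT : Ω → RPath l d) (ω : Ω) : RPath l d :=
  fun t => if ‖ZT ω 0‖ = 0 then 0 else ‖ZT ω 0‖⁻¹ • ZT ω t

/-- The tilted measure `P̂`. -/
def tilted {Ω : Type*} [MeasurableSpace Ω] (P : Measure Ω) {l d : ℕ} (α : ℝ)
    (ZT : Ω → RPath l d) : Measure Ω :=
  P.withDensity fun ω => ENNReal.ofReal (‖ZT ω 0‖ ^ α)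

/-! If `S(Z̃) = 0` with positive probability, Tonelli gives a countable dense set `D` of times
at which `Z̃` a.s. vanishes on `{S(Z̃) = 0}`, so for some `t` the event `Z̃ ∈ U`, where `U` is the
cone of paths vanishing on `D` but not at `t`, has positive probability. Testing the identity
defining `C[Z]` with `∞ · 1_U` makes this probability positive for every shift `B^h Z̃`, so by
Tonelli again some path has a set of shifts in `U` of positive Lebesgue measure. By Steinhaus'
theorem two of these shifts place a point of `D` and the point `t` at the same time of the path,
where it would have to be both zero and nonzero. -/

open scoped Pointwise

section PathSpace

variable {G E : Type*}

def vanishingOnNonzeroAt [Zero E] (D : Set G) (t : G) : Set (G → E) :=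
  {f | f t ≠ 0 ∧ ∀ x ∈ D, f x = 0}

theorem smul_mem_vanishingOnNonzeroAt_iff {𝕜 : Type*} [DivisionRing 𝕜] [AddCommGroup E]
    [Module 𝕜 E] {D : Set G} {t : G} {c : 𝕜} (hc : c ≠ 0) {f : G → E} :
    c • f ∈ vanishingOnNonzeroAt D t ↔ f ∈ vanishingOnNonzeroAt D t := by
  simp [vanishingOnNonzeroAt, hc]

variable [Zero E] [MeasurableSpace E] [MeasurableSingletonClass E]

theorem measurableSet_vanishingOnNonzeroAt {D : Set G} (hD : D.Countable) (t : G) :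
    MeasurableSet (vanishingOnNonzeroAt (E := E) D t) := by
  have : vanishingOnNonzeroAt (E := E) D t = {f | f t = 0}ᶜ ∩ ⋂ x ∈ D, {f | f x = 0} := by
    ext; simp [vanishingOnNonzeroAt]
  rw [this]
  exact ((measurable_pi_apply t) (measurableSet_singleton 0)).compl.inter <|
    .biInter hD fun x _ => (measurable_pi_apply x) (measurableSet_singleton 0)

variable [AddCommGroup G] [TopologicalSpace G] [IsTopologicalAddGroup G] [LocallyCompactSpace G]
  [SecondCountableTopology G] [MeasurableSpace G] [BorelSpace G]

theorem addHaar_setOf_shift_mem_vanishingOnNonzeroAt (μ : Measure G) [μ.IsAddHaarMeasure]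
    {f : G → E} (hf : Measurable f) {D : Set G} (hDc : D.Countable) (hDd : Dense D) (t : G) :
    μ {h | (fun s => f (s - h)) ∈ vanishingOnNonzeroAt D t} = 0 := by
  set H := {h | (fun s => f (s - h)) ∈ vanishingOnNonzeroAt D t}
  have hHm : MeasurableSet H :=
    measurableSet_vanishingOnNonzeroAt hDc t |>.preimage <|
      measurable_pi_lambda _ fun s => hf.comp (measurable_const.sub measurable_id)
  by_contra hpos
  have hnhds : (· - t) ⁻¹' (H - H) ∈ 𝓝 t := by
    refine (continuous_id.sub continuous_const).continuousAt.preimage_mem_nhds ?_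
    simpa using Measure.sub_mem_nhds_zero_of_addHaar_pos μ H hHm (pos_iff_ne_zero.2 hpos)
  obtain ⟨x, ⟨a, ha, b, hb, hab⟩, hxD⟩ := mem_closure_iff_nhds.1 (hDd t) _ hnhds
  have hshift : x - a = t - b := by
    rw [sub_eq_sub_iff_add_eq_add] at hab ⊢
    rw [← hab, add_comm]
  exact hb.1 (by simpa only [hshift] using ha.2 x hxD)

end PathSpace

section Lebesgue

variable {G E : Type*} [MeasurableSpace G] [NormedAddCommGroup E] [MeasurableSpace E]
  [BorelSpace E]

theorem ae_eq_zero_of_lintegral_rpow_norm_eq_zero {μ : Measure G} {f : G → E}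
    (hf : AEMeasurable f μ) {α : ℝ} (h : ∫⁻ s, ENNReal.ofReal (‖f s‖ ^ α) ∂μ = 0) :
    f =ᵐ[μ] 0 := by
  filter_upwards [(lintegral_eq_zero_iff' (hf.norm.pow_const α).ennreal_ofReal).1 h] with s hs
  by_contra hne
  have hpos : 0 < ‖f s‖ ^ α := Real.rpow_pos_of_pos (norm_pos_iff.2 hne) α
  exact hpos.not_ge (ENNReal.ofReal_eq_zero.1 hs)

theorem ae_measure_setOf_lintegral_rpow_norm_eq_zero_and_ne_zero {Ω : Type*}
    [MeasurableSpace Ω] (P : Measure Ω) [SFinite P] (μ : Measure G) [SFinite μ]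
    {X : Ω → G → E} (hX : Measurable fun p : Ω × G => X p.1 p.2) (α : ℝ) :
    ∀ᵐ t ∂μ, P {ω | ∫⁻ s, ENNReal.ofReal (‖X ω s‖ ^ α) ∂μ = 0 ∧ X ω t ≠ 0} = 0 := by
  set S := fun ω => ∫⁻ s, ENNReal.ofReal (‖X ω s‖ ^ α) ∂μ
  have hS : Measurable S := (hX.norm.pow_const α).ennreal_ofReal.lintegral_prod_right'
  have hm : MeasurableSet {p : Ω × G | S p.1 = 0 → X p.1 p.2 = 0} :=
    (hS.comp measurable_fst (measurableSet_singleton 0)).imp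
      (hX (measurableSet_singleton 0))
  have hswap := (Measure.ae_ae_comm (μ := P) (ν := μ)
      (p := fun ω t => S ω = 0 → X ω t = 0) hm).1 <| Eventually.of_forall fun ω => by
    by_cases h0 : S ω = 0
    · filter_upwards [ae_eq_zero_of_lintegral_rpow_norm_eq_zero
        (hX.comp measurable_prodMk_left).aemeasurable h0] with t ht _ using ht
    · exact Eventually.of_forall fun t h => absurd h h0
  filter_upwards [hswap] with t ht
  simpa only [ae_iff, Classical.not_imp] using ht

end Lebesgue

section RandomField

variable {l d : ℕ}

theorem shift_zero (f : RPath l d) : shift 0 f = f := by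
  funext s
  simp [shift]

theorem JointlyMeasurable.measurable_path {Ω : Type*} [MeasurableSpace Ω] {X : Ω → RPath l d}
    (hX : JointlyMeasurable X) (ω : Ω) : Measurable (X ω) :=
  hX.comp measurable_prodMk_left

theorem JointlyMeasurable.measurable_shift {Ω : Type*} [MeasurableSpace Ω] {X : Ω → RPath l d}
    (hX : JointlyMeasurable X) : Measurable fun p : Ω × Tsp l => shift p.2 (X p.1) :=
  measurable_pi_lambda _ fun _ =>
    hX.comp (measurable_fst.prodMk (measurable_const.sub measurable_snd))

theorem hom_indicator_top {β : ℝ} {U : Set (RPath l d)} (hU : MeasurableSet U)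
    (hcone : ∀ c : ℝ, 0 < c → ∀ f : RPath l d, c • f ∈ U ↔ f ∈ U) :
    Hom l d β (U.indicator fun _ => ∞) := by
  refine ⟨measurable_const.indicator hU, fun c hc f => ?_⟩
  have hcβ : ENNReal.ofReal (c ^ β) ≠ 0 := by simpa using Real.rpow_pos_of_pos hc β
  change U.indicator _ (c • f) = _
  by_cases hf : f ∈ U
  · rw [Set.indicator_of_mem ((hcone c hc f).2 hf), Set.indicator_of_mem hf,
      ENNReal.mul_top hcβ]
  · rw [Set.indicator_of_notMem (mt (hcone c hc f).1 hf), Set.indicator_of_notMem hf, mul_zero]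

variable {Ω Ω' : Type*} [MeasurableSpace Ω] [MeasurableSpace Ω'] {P : Measure Ω}
  {P' : Measure Ω'} {α : ℝ} {Z : Ω → RPath l d} {ZT : Ω' → RPath l d}

theorem MemC.measure_shift_mem_eq_zero_iff (hZT : MemC P P' α Z ZT) {U : Set (RPath l d)}
    (hU : MeasurableSet U) (hcone : ∀ c : ℝ, 0 < c → ∀ f : RPath l d, c • f ∈ U ↔ f ∈ U)
    (h : Tsp l) : P' {ω | shift h (ZT ω) ∈ U} = 0 ↔ P' {ω | ZT ω ∈ U} = 0 := by
  have hval : ∀ h : Tsp l, ∫⁻ ω, U.indicator (fun _ => ∞) (Z ω) ∂P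
      = ∞ * P' {ω | shift h (ZT ω) ∈ U} := fun h => by
    rw [hZT.2 _ (hom_indicator_top hU hcone) h, lintegral_indicator_const_comp
      (f := fun ω => shift h (ZT ω))
      (hZT.1.1.measurable_shift.comp (measurable_id.prodMk measurable_const)) hU]
    rfl
  have := (hval h).symm.trans (hval 0)
  simp only [shift_zero] at this
  simpa using congrArg (· = 0) this

theorem MemC.measure_mem_vanishingOnNonzeroAt (hZT : MemC P P' α Z ZT) [SFinite P']
    {D : Set (Tsp l)} (hDc : D.Countable) (hDd : Dense D) (t : Tsp l) :
    P' {ω | ZT ω ∈ vanishingOnNonzeroAt D t} = 0 := by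
  set U := vanishingOnNonzeroAt (E := Vsp d) D t
  have hU : MeasurableSet U := measurableSet_vanishingOnNonzeroAt hDc t
  have hjoint : MeasurableSet {p : Ω' × Tsp l | shift p.2 (ZT p.1) ∉ U} :=
    (hZT.1.1.measurable_shift hU).compl
  have hshifts : ∀ ω, volume {h | shift h (ZT ω) ∈ U} = 0 := fun ω =>
    addHaar_setOf_shift_mem_vanishingOnNonzeroAt volume (hZT.1.1.measurable_path ω) hDc hDd t
  have hnull : ∀ᵐ h, P' {ω | shift h (ZT ω) ∈ U} = 0 := by
    have := (Measure.ae_ae_comm (μ := P') (ν := volume)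
      (p := fun ω h => shift h (ZT ω) ∉ U) hjoint).1 <| Eventually.of_forall fun ω =>
        ae_iff.2 <| by simpa only [not_not] using hshifts ω
    filter_upwards [this] with h hh
    simpa only [ae_iff, not_not] using hh
  obtain ⟨h, hh⟩ := hnull.exists
  exact (hZT.measure_shift_mem_eq_zero_iff hU
    (fun c hc _ => smul_mem_vanishingOnNonzeroAt_iff hc.ne') h).1 hh

theorem MemC.measure_setOf_Sfun_eq_zero_and_ne_zero (hZT : MemC P P' α Z ZT) [SFinite P']
    (t : Tsp l) : P' {ω | Sfun α (ZT ω) = 0 ∧ ZT ω t ≠ 0} = 0 := by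
  have hae := ae_measure_setOf_lintegral_rpow_norm_eq_zero_and_ne_zero P' volume hZT.1.1 α
  obtain ⟨D, hDnull, hDc, hDd⟩ := (Measure.dense_of_ae hae).exists_countable_dense_subset
  have hcover : {ω | Sfun α (ZT ω) = 0 ∧ ZT ω t ≠ 0} ⊆ {ω | ZT ω ∈ vanishingOnNonzeroAt D t} ∪
      ⋃ x ∈ D, {ω | Sfun α (ZT ω) = 0 ∧ ZT ω x ≠ 0} := by
    rintro ω ⟨hS, ht⟩
    by_cases hD : ∃ x ∈ D, ZT ω x ≠ 0
    · obtain ⟨x, hx, hne⟩ := hD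
      exact Or.inr (Set.mem_biUnion hx ⟨hS, hne⟩)
    · exact Or.inl ⟨ht, by simpa using hD⟩
  exact measure_mono_null hcover <| measure_union_null
    (hZT.measure_mem_vanishingOnNonzeroAt hDc hDd t) ((measure_biUnion_null_iff hDc).2 hDnull)

end RandomField

theorem stmt1_general {Ω : Type*} [MeasurableSpace Ω] (P : Measure Ω)
    [IsProbabilityMeasure P] {l d : ℕ} (α : ℝ) (Z : Ω → RPath l d) :
    ∀ ZT : Ω → RPath l d, MemC P P α Z ZT →
      P {ω | 0 < Sfun α (ZT ω)} = 1 := by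
  intro ZT hZT
  obtain ⟨T₀, hT₀c, hT₀⟩ := hZT.1.2.2
  set N := ⋃ t ∈ T₀, {ω | Sfun α (ZT ω) = 0 ∧ ZT ω t ≠ 0}
  have hN : P N = 0 := (measure_biUnion_null_iff hT₀c).2 fun t _ =>
    hZT.measure_setOf_Sfun_eq_zero_and_ne_zero t
  have hcover : {ω | ∃ t ∈ T₀, 0 < ‖ZT ω t‖} ⊆ {ω | 0 < Sfun α (ZT ω)} ∪ N := by
    rintro ω ⟨t, ht, hpos⟩
    rcases eq_or_ne (Sfun α (ZT ω)) 0 with hS | hS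
    · exact Or.inr (Set.mem_biUnion ht ⟨hS, norm_pos_iff.1 hpos⟩)
    · exact Or.inl (pos_iff_ne_zero.2 hS)
  refine le_antisymm prob_le_one ?_
  calc 1 = P {ω | ∃ t ∈ T₀, 0 < ‖ZT ω t‖} := hT₀.symm
    _ ≤ P {ω | 0 < Sfun α (ZT ω)} + P N := (measure_mono hcover).trans (measure_union_le _ _)
    _ = P {ω | 0 < Sfun α (ZT ω)} := by rw [hN, add_zero]

/-- every `Z̃ ∈ C[Z]` satisfies `P(S(Z̃) > 0) = 1`. -/
theorem stmt1 {Ω : Type*} [MeasurableSpace Ω] (P : Measure Ω)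
    [IsProbabilityMeasure P] (hPc : P.IsComplete) [NullSingletonClass P]
    {l d : ℕ} (hl : 1 ≤ l) (hd : 1 ≤ d) (α : ℝ) (hα : 0 < α)
    (Z : Ω → RPath l d) (hZ : StarC P α Z) :
    ∀ ZT : Ω → RPath l d, MemC P P α Z ZT →
      P {ω | 0 < Sfun α (ZT ω)} = 1 :=
  stmt1_general P α Z
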